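/- arXiv:1511.03611 — 5 statements merged into one kernel-verified Lean document; each statement's English description precedes it below -/
import Mathlib

section
/- (Theorem 1, sufficiency direction: marginal congestion pricing decentralizes the social optimum.) Suppose λ* ∈ K minimizes the social cost f(λ) = Σ_a (λ_a · s_a(λ_a) + b_a · λ_a) over K. Define the tolls ϑ_a = λ*_a · (deriv s_a)(λ*_a). Then λ* also minimizes the tolled user-equilibrium potential g(λ) = Σ_a (∫_0^{λ_a} s_a(x) dx + (b_a + ϑ_a) · λ_a) over K. -/
/-!
The social cost is separable, so first-order optimality of `lam` on the convex set `K` says that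
`∑ a, (s a (lam a) + lam a * s' a (lam a) + b a) * (μ a - lam a) ≥ 0` for every feasible `μ`.
The tolled potential is separable too, and since each `s a` is monotone its primitive is convex:
it lies above its tangent line `∫₀^{lam a} s a + s a (lam a) * (x - lam a)`. Summing the tangent
lines reproduces exactly the first-order expression, which is nonnegative.
-/

theorem Monotone.intervalIntegral_add_mul_sub_le {s : ℝ → ℝ} (hs : Monotone s) (a c x : ℝ) :
    (∫ t in a..c, s t) + s c * (x - c) ≤ ∫ t in a..x, s t := by
  rw [← intervalIntegral.integral_add_adjacent_intervals (b := c) (c := x) hs.intervalIntegrable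
    hs.intervalIntegrable, add_le_add_iff_left]
  rcases le_total c x with hcx | hxc
  · have h := intervalIntegral.integral_mono_on hcx (μ := MeasureTheory.volume)
      intervalIntegrable_const hs.intervalIntegrable fun t ht => hs ht.1
    simp only [intervalIntegral.integral_const, smul_eq_mul] at h
    linarith
  · have h := intervalIntegral.integral_mono_on hxc (μ := MeasureTheory.volume)
      hs.intervalIntegrable intervalIntegrable_const fun t ht => hs ht.2
    rw [intervalIntegral.integral_symm x c]
    simp only [intervalIntegral.integral_const, smul_eq_mul] at h
    linarith

theorem IsMinOn.sum_deriv_mul_sub_nonneg {ι : Type*} [Fintype ι] {K : Set (ι → ℝ)}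
    (hK : Convex ℝ K) {f : ι → ℝ → ℝ} {x y : ι → ℝ}
    (hmin : IsMinOn (fun z => ∑ i, f i (z i)) K x) (hf : ∀ i, DifferentiableAt ℝ (f i) (x i))
    (hx : x ∈ K) (hy : y ∈ K) :
    0 ≤ ∑ i, deriv (f i) (x i) * (y i - x i) := by
  have hderiv : HasFDerivAt (fun z => ∑ i, f i (z i))
      (∑ i, deriv (f i) (x i) • ContinuousLinearMap.proj i) x :=
    HasFDerivAt.fun_sum fun i _ =>
      (hf i).hasDerivAt.comp_hasFDerivAt x (hasFDerivAt_apply (𝕜 := ℝ) i x)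
  simpa using hmin.localize.hasFDerivWithinAt_nonneg hderiv.hasFDerivWithinAt
    (sub_mem_posTangentConeAt_of_segment_subset (hK.segment_subset hx hy))

theorem marginal_pricing_sufficiency_general {n : ℕ} (K : Set (Fin n → ℝ)) (hK : Convex ℝ K)
    (s : Fin n → ℝ → ℝ) (b : Fin n → ℝ)
    (hdiff : ∀ a, Differentiable ℝ (s a))
    (hderiv_nonneg : ∀ a x, 0 ≤ deriv (s a) x)
    (lam : Fin n → ℝ) (hlam : lam ∈ K)
    (hmin : ∀ μ ∈ K,
      (∑ a, (lam a * s a (lam a) + b a * lam a)) ≤ ∑ a, (μ a * s a (μ a) + b a * μ a)) :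
    ∀ μ ∈ K,
      (∑ a, ((∫ x in (0:ℝ)..(lam a), s a x)
          + (b a + lam a * deriv (s a) (lam a)) * lam a))
      ≤ ∑ a, ((∫ x in (0:ℝ)..(μ a), s a x)
          + (b a + lam a * deriv (s a) (lam a)) * μ a) := by
  intro μ hμ
  have hcost_deriv : ∀ a, HasDerivAt (fun x => x * s a x + b a * x)
      (s a (lam a) + lam a * deriv (s a) (lam a) + b a) (lam a) := fun a => by
    simpa [add_mul] using ((hasDerivAt_id' _).fun_mul (hdiff a _).hasDerivAt).fun_add
      ((hasDerivAt_id' _).const_mul (b a))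
  have hfirst_order := IsMinOn.sum_deriv_mul_sub_nonneg hK (f := fun a x => x * s a x + b a * x)
    hmin (fun a => (hcost_deriv a).differentiableAt) hlam hμ
  simp only [fun a => (hcost_deriv a).deriv] at hfirst_order
  have hsupport : ∀ a, (∫ x in (0:ℝ)..(lam a), s a x) + s a (lam a) * (μ a - lam a)
      ≤ ∫ x in (0:ℝ)..(μ a), s a x := fun a =>
    (monotone_of_deriv_nonneg (hdiff a) (hderiv_nonneg a)).intervalIntegral_add_mul_sub_le ..
  rw [← sub_nonneg, ← Finset.sum_sub_distrib]
  exact hfirst_order.trans <| Finset.sum_le_sum fun a _ => by linear_combination hsupport a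

/-- Theorem 1 (sufficiency): marginal congestion pricing decentralizes the social optimum.
If `lam` minimizes the social cost `f(λ) = ∑ a, (λ_a * s_a(λ_a) + b_a * λ_a)` over the convex
feasible set `K`, then with tolls `ϑ_a = lam_a * (deriv (s a)) (lam a)`, `lam` also minimizes the
tolled user-equilibrium (Beckmann) potential
`g(λ) = ∑ a, (∫ x in 0..λ_a, s_a x + (b_a + ϑ_a) * λ_a)` over `K`. -/
theorem marginal_pricing_sufficiency {n : ℕ} (K : Set (Fin n → ℝ)) (hK : Convex ℝ K)
    (s : Fin n → ℝ → ℝ) (b : Fin n → ℝ)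
    (hcont : ∀ a, Continuous (s a))
    (hdiff : ∀ a, Differentiable ℝ (s a))
    (hderiv_nonneg : ∀ a x, 0 ≤ deriv (s a) x)
    (lam : Fin n → ℝ) (hlam : lam ∈ K)
    (hmin : ∀ μ ∈ K,
      (∑ a, (lam a * s a (lam a) + b a * lam a)) ≤ ∑ a, (μ a * s a (μ a) + b a * μ a)) :
    ∀ μ ∈ K,
      (∑ a, ((∫ x in (0:ℝ)..(lam a), s a x)
          + (b a + lam a * deriv (s a) (lam a)) * lam a))
      ≤ ∑ a, ((∫ x in (0:ℝ)..(μ a), s a x)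
          + (b a + lam a * deriv (s a) (lam a)) * μ a) :=
  marginal_pricing_sufficiency_general K hK s b hdiff hderiv_nonneg lam hlam hmin
end

section
/- (Theorem 1, necessity direction: tolled user equilibrium is socially optimal.) Assume additionally that the social cost f(λ) = Σ_a (λ_a · s_a(λ_a) + b_a · λ_a) is convex on K. Suppose λ* ∈ K minimizes the tolled user-equilibrium potential g(λ) = Σ_a (∫_0^{λ_a} s_a(x) dx + (b_a + ϑ_a) · λ_a) over K, where the tolls are ϑ_a = λ*_a · (deriv s_a)(λ*_a). Then λ* minimizes f over K. -/
/-!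
The toll `ϑ_a = λ*_a s_a'(λ*_a)` makes the marginal potential `s_a(λ*_a) + b_a + ϑ_a` of each arc
equal to its marginal social cost `d/dx (x s_a(x) + b_a x)` at `λ*_a`. So the social cost `f` and
the potential `g` have the same derivative `D` at `λ*` in the direction of any `μ ∈ K`.
Minimality of `g` on the convex set `K` gives `0 ≤ D`, and convexity of `f` gives
`D ≤ f μ - f λ*`.
-/

open Set

section LineDeriv

variable {E : Type*} [AddCommGroup E] [Module ℝ E]

theorem ConvexOn.le_sub_of_hasLineDerivAt {s : Set E} {f : E → ℝ} {x y : E} {f' : ℝ}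
    (hf : ConvexOn ℝ s f) (hx : x ∈ s) (hy : y ∈ s) (hd : HasLineDerivAt ℝ f f' x (y - x)) :
    f' ≤ f y - f x := by
  have hline : ConvexOn ℝ (Icc 0 1) (fun t : ℝ => f (x + t • (y - x))) := by
    refine ((hf.comp_affineMap (AffineMap.lineMap x y)).subset ?_ (convex_Icc 0 1)).congr ?_
    · intro t ht
      exact hf.1.lineMap_mem hx hy ⟨ht.1, ht.2⟩
    · intro t _
      simp [AffineMap.lineMap_apply, add_comm]
  simpa [slope_def_field] using
    hline.le_slope_of_hasDerivAt (left_mem_Icc.2 zero_le_one) (right_mem_Icc.2 zero_le_one)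
      zero_lt_one hd

theorem IsMinOn.hasLineDerivAt_nonneg {s : Set E} {g : E → ℝ} {x y : E} {g' : ℝ}
    (hg : IsMinOn g s x) (hs : Convex ℝ s) (hx : x ∈ s) (hy : y ∈ s)
    (hd : HasLineDerivAt ℝ g g' x (y - x)) : 0 ≤ g' := by
  have hline : IsMinOn (fun t : ℝ => g (x + t • (y - x))) (Icc 0 1) 0 := by
    intro t ht
    simpa using hg (hs.add_smul_sub_mem hx hy ht)
  simpa using hline.localize.hasFDerivWithinAt_nonneg hd.hasFDerivAt.hasFDerivWithinAt
    (mem_posTangentConeAt_of_segment_subset (y := 1) (by simp [segment_eq_Icc]))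

end LineDeriv

theorem hasLineDerivAt_sum_apply {ι : Type*} [Fintype ι] {φ : ι → ℝ → ℝ} {φ' : ι → ℝ}
    {x : ι → ℝ} (v : ι → ℝ) (hφ : ∀ i, HasDerivAt (φ i) (φ' i) (x i)) :
    HasLineDerivAt ℝ (fun y => ∑ i, φ i (y i)) (∑ i, φ' i * v i) x v := by
  have hline (i : ι) : HasDerivAt (fun t : ℝ => x i + t * v i) (v i) 0 := by
    simpa using (hasDerivAt_mul_const (v i)).const_add (x i)
  have hterm (i : ι) : HasDerivAt (fun t : ℝ => φ i (x i + t * v i)) (φ' i * v i) 0 :=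
    (hφ i).comp_of_eq 0 (hline i) (by simp)
  simpa [HasLineDerivAt] using HasDerivAt.fun_sum (u := Finset.univ) fun i _ => hterm i

theorem HasDerivAt.id_mul_add_const_mul {s : ℝ → ℝ} {s' x : ℝ} (hs : HasDerivAt s s' x)
    (b : ℝ) : HasDerivAt (fun y => y * s y + b * y) (s x + (b + x * s')) x :=
  (((hasDerivAt_id' x).fun_mul hs).fun_add ((hasDerivAt_id' x).const_mul b)).congr_deriv
    (by ring)

theorem Continuous.hasDerivAt_integral_add_const_mul {s : ℝ → ℝ} (hs : Continuous s) (c x : ℝ) :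
    HasDerivAt (fun y => (∫ t in (0 : ℝ)..y, s t) + c * y) (s x + c) x := by
  simpa using
    (hs.integral_hasStrictDerivAt 0 x).hasDerivAt.fun_add ((hasDerivAt_id' x).const_mul c)

theorem marginal_pricing_necessity_general {n : ℕ} (K : Set (Fin n → ℝ))
    (s : Fin n → ℝ → ℝ) (b : Fin n → ℝ)
    (hdiff : ∀ a, Differentiable ℝ (s a))
    (hconv : ConvexOn ℝ K (fun lam : Fin n → ℝ =>
      ∑ a, (lam a * s a (lam a) + b a * lam a)))
    (lam : Fin n → ℝ) (hlam : lam ∈ K)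
    (hmin : ∀ μ ∈ K,
      (∑ a, ((∫ x in (0:ℝ)..(lam a), s a x)
          + (b a + lam a * deriv (s a) (lam a)) * lam a))
      ≤ ∑ a, ((∫ x in (0:ℝ)..(μ a), s a x)
          + (b a + lam a * deriv (s a) (lam a)) * μ a)) :
    ∀ μ ∈ K,
      (∑ a, (lam a * s a (lam a) + b a * lam a)) ≤ ∑ a, (μ a * s a (μ a) + b a * μ a) := by
  intro μ hμ
  have hsocial := hasLineDerivAt_sum_apply (μ - lam) fun a =>
    ((hdiff a).differentiableAt (x := lam a)).hasDerivAt.id_mul_add_const_mul (b a)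
  have hpotential := hasLineDerivAt_sum_apply (μ - lam) fun a =>
    (hdiff a).continuous.hasDerivAt_integral_add_const_mul
      (b a + lam a * deriv (s a) (lam a)) (lam a)
  linarith [hconv.le_sub_of_hasLineDerivAt hlam hμ hsocial,
    (isMinOn_iff.2 hmin).hasLineDerivAt_nonneg hconv.1 hlam hμ hpotential]

/-- Theorem 1 (necessity): a tolled user equilibrium is socially optimal.
Assume the social cost `f(λ) = ∑ a, (λ_a * s_a(λ_a) + b_a * λ_a)` is convex on the convex
feasible set `K`. If `lam ∈ K` minimizes the tolled user-equilibrium (Beckmann) potential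
`g(λ) = ∑ a, (∫ x in 0..λ_a, s_a x + (b_a + ϑ_a) * λ_a)` over `K`, with tolls
`ϑ_a = lam_a * (deriv (s a)) (lam a)`, then `lam` minimizes `f` over `K`. -/
theorem marginal_pricing_necessity {n : ℕ} (K : Set (Fin n → ℝ)) (hK : Convex ℝ K)
    (s : Fin n → ℝ → ℝ) (b : Fin n → ℝ)
    (hcont : ∀ a, Continuous (s a))
    (hdiff : ∀ a, Differentiable ℝ (s a))
    (hderiv_nonneg : ∀ a x, 0 ≤ deriv (s a) x)
    (hconv : ConvexOn ℝ K (fun lam : Fin n → ℝ =>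
      ∑ a, (lam a * s a (lam a) + b a * lam a)))
    (lam : Fin n → ℝ) (hlam : lam ∈ K)
    (hmin : ∀ μ ∈ K,
      (∑ a, ((∫ x in (0:ℝ)..(lam a), s a x)
          + (b a + lam a * deriv (s a) (lam a)) * lam a))
      ≤ ∑ a, ((∫ x in (0:ℝ)..(μ a), s a x)
          + (b a + lam a * deriv (s a) (lam a)) * μ a)) :
    ∀ μ ∈ K,
      (∑ a, (lam a * s a (lam a) + b a * lam a)) ≤ ∑ a, (μ a * s a (μ a) + b a * μ a) :=
  marginal_pricing_necessity_general K s b hdiff hconv lam hlam hmin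
end

section
/- (Strong convexity of the per-arc social cost for latency functions with derivative bounded below, corrected version of the footnote in Lemma 1.) Let m > 0 and let s : ℝ → ℝ be differentiable and convex on [0,∞) with (deriv s)(x) ≥ m for all x ≥ 0. Then the function x ↦ x · s(x) is strongly convex with parameter 2m on the set [0,∞), i.e., the function x ↦ x · s(x) − m·x² is convex on [0,∞). -/
/-!
Write `x * s x - m * x ^ 2 = x * t x` with `t x = s x - m * x`. The bound `m ≤ s'` makes `t`
monotone, and `t` is convex because `s` is. Then `x * (t x - t 0)` is a product of two
nonnegative, convex, similarly ordered functions on `[0, ∞)`, hence convex, and adding the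
linear term `t 0 * x` keeps it convex.
-/

open Set

theorem MonotoneOn.sub_mul_of_le_deriv {D : Set ℝ} (hD : Convex ℝ D) {f : ℝ → ℝ} {m : ℝ}
    (hf : ContinuousOn f D) (hf' : DifferentiableOn ℝ f (interior D))
    (hm : ∀ x ∈ interior D, m ≤ deriv f x) : MonotoneOn (fun x => f x - m * x) D :=
  fun x hx y hy hxy => by
    have := hD.mul_sub_le_image_sub_of_le_deriv hf hf' hm x hx y hy hxy
    dsimp only
    linarith

theorem ConvexOn.id_mul_of_monotoneOn {𝕜 : Type*} [Field 𝕜] [LinearOrder 𝕜]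
    [IsStrictOrderedRing 𝕜] {g : 𝕜 → 𝕜} (hg : ConvexOn 𝕜 (Ici 0) g)
    (hg_mono : MonotoneOn g (Ici 0)) : ConvexOn 𝕜 (Ici 0) (fun x => x * g x) := by
  have hshift : ConvexOn 𝕜 (Ici 0) (fun x => x * (g x - g 0)) :=
    (convexOn_id (convex_Ici 0)).mul (hg.sub (concaveOn_const _ (convex_Ici 0)))
      (fun _ hx => hx) (fun _ hx => sub_nonneg.2 (hg_mono self_mem_Ici hx hx))
      (monotoneOn_id.monovaryOn fun _ hx _ hy hxy => sub_le_sub_right (hg_mono hx hy hxy) _)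
  refine (hshift.add ((LinearMap.mulLeft 𝕜 (g 0)).convexOn (convex_Ici 0))).congr fun x _ => ?_
  simp only [Pi.add_apply, LinearMap.mulLeft_apply]
  ring

theorem social_cost_strongly_convex_general (m : ℝ) (s : ℝ → ℝ)
    (hdiff : DifferentiableOn ℝ s (Set.Ici (0:ℝ)))
    (hconv : ConvexOn ℝ (Set.Ici (0:ℝ)) s)
    (hderiv : ∀ x : ℝ, 0 ≤ x → m ≤ deriv s x) :
    StrongConvexOn (Set.Ici (0:ℝ)) (2 * m) (fun x : ℝ => x * s x) ∧
    ConvexOn ℝ (Set.Ici (0:ℝ)) (fun x : ℝ => x * s x - m * x ^ 2) := by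
  have ht_mono : MonotoneOn (fun x => s x - m * x) (Ici 0) :=
    .sub_mul_of_le_deriv (convex_Ici 0) hdiff.continuousOn (hdiff.mono interior_subset)
      fun x hx => hderiv x (interior_subset hx)
  have ht_conv : ConvexOn ℝ (Ici 0) (fun x => s x - m * x) :=
    hconv.sub ((LinearMap.mulLeft ℝ m).concaveOn (convex_Ici 0))
  have hg : ConvexOn ℝ (Ici 0) (fun x : ℝ => x * s x - m * x ^ 2) :=
    (ht_conv.id_mul_of_monotoneOn ht_mono).congr fun x _ => by ring
  refine ⟨?_, hg⟩
  rw [strongConvexOn_iff_convex]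
  refine hg.congr fun x _ => ?_
  rw [Real.norm_eq_abs, sq_abs]
  ring

/-- Strong convexity of the per-arc social cost: if `s` is differentiable and convex on `[0,∞)`
with derivative bounded below by `m > 0` there, then `x ↦ x * s x` is strongly convex with
parameter `2 * m` on `[0,∞)`, i.e. `x ↦ x * s x - m * x ^ 2` is convex on `[0,∞)`. -/
theorem social_cost_strongly_convex (m : ℝ) (hm : 0 < m) (s : ℝ → ℝ)
    (hdiff : DifferentiableOn ℝ s (Set.Ici (0:ℝ)))
    (hconv : ConvexOn ℝ (Set.Ici (0:ℝ)) s)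
    (hderiv : ∀ x : ℝ, 0 ≤ x → m ≤ deriv s x) :
    StrongConvexOn (Set.Ici (0:ℝ)) (2 * m) (fun x : ℝ => x * s x) ∧
    ConvexOn ℝ (Set.Ici (0:ℝ)) (fun x : ℝ => x * s x - m * x ^ 2) :=
  social_cost_strongly_convex_general m s hdiff hconv hderiv
end

section
/- (Minimizers of a strongly convex function under linear tilts are Lipschitz in the tilt; key step in the proof of Lemma 1.) Let E be a real inner product space, K ⊆ E a convex set, σ > 0, and f : E → ℝ strongly convex with parameter σ on K. Suppose x₁ ∈ K minimizes x ↦ f(x) + ⟪c₁, x⟫ over K and x₂ ∈ K minimizes x ↦ f(x) + ⟪c₂, x⟫ over K. Then σ · ‖x₁ − x₂‖ ≤ ‖c₁ − c₂‖. -/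
open scoped RealInnerProductSpace

lemma tilted_min_quadratic_growth {E : Type*} [NormedAddCommGroup E]
    [InnerProductSpace ℝ E] {K : Set E} {σ : ℝ} {f : E → ℝ}
    (hf : StrongConvexOn K σ f) (hσ : 0 ≤ σ) (c x y : E) (hx : x ∈ K) (hy : y ∈ K)
    (hmin : ∀ z ∈ K, f x + ⟪c, x⟫ ≤ f z + ⟪c, z⟫) :
    f x + ⟪c, x⟫ + σ / 2 * ‖y - x‖ ^ 2 ≤ f y + ⟪c, y⟫ := by
  set D : ℝ := σ / 2 * ‖y - x‖ ^ 2 with hD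
  have hD0 : 0 ≤ D := by positivity
  have key : ∀ a : ℝ, 0 < a → a ≤ 1 →
      (1 - a) * D ≤ (f y + ⟪c, y⟫) - (f x + ⟪c, x⟫) := by
    intro a ha ha1
    have hb : (0:ℝ) ≤ 1 - a := by linarith
    have hab : a + (1 - a) = 1 := by ring
    have hz : a • y + (1 - a) • x ∈ K := hf.1 hy hx ha.le hb hab
    have hconv := hf.2 hy hx ha.le hb hab
    have hm := hmin _ hz
    have hin : ⟪c, a • y + (1 - a) • x⟫ = a * ⟪c, y⟫ + (1 - a) * ⟪c, x⟫ := by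
      simp [inner_add_right, real_inner_smul_right]
    simp only [smul_eq_mul] at hconv
    have : f x + ⟪c, x⟫ ≤ a * f y + (1 - a) * f x - a * (1 - a) * D
        + (a * ⟪c, y⟫ + (1 - a) * ⟪c, x⟫) := by
      calc f x + ⟪c, x⟫ ≤ f (a • y + (1 - a) • x) + ⟪c, a • y + (1 - a) • x⟫ := hm
        _ ≤ _ := by rw [hin, hD]; linarith [hconv]
    have h2 : a * ((1 - a) * D) ≤ a * ((f y + ⟪c, y⟫) - (f x + ⟪c, x⟫)) := by nlinarith
    exact le_of_mul_le_mul_left (by linarith [h2]) ha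
  have : D ≤ (f y + ⟪c, y⟫) - (f x + ⟪c, x⟫) := by
    refine le_of_forall_pos_le_add fun ε hε => ?_
    set a : ℝ := min 1 (ε / (D + 1)) with haa
    have ha : 0 < a := lt_min one_pos (by positivity)
    have ha1 : a ≤ 1 := min_le_left _ _
    have haD : a * D ≤ ε := by
      have h1 : a ≤ ε / (D + 1) := min_le_right _ _
      have h2 : a * (D + 1) ≤ ε := by
        rw [← le_div_iff₀ (by positivity)]; exact h1
      nlinarith
    have := key a ha ha1
    nlinarith
  linarith

/-- Minimizers of a strongly convex function under linear tilts are Lipschitz in the tilt: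
if `x₁` minimizes `f + ⟪c₁, ·⟫` and `x₂` minimizes `f + ⟪c₂, ·⟫` over the convex set `K`,
with `f` strongly convex with parameter `σ > 0` on `K`, then `σ * ‖x₁ - x₂‖ ≤ ‖c₁ - c₂‖`. -/
theorem strong_convex_tilted_minimizers_lipschitz {E : Type*} [NormedAddCommGroup E]
    [InnerProductSpace ℝ E] (K : Set E) (hK : Convex ℝ K) (σ : ℝ) (hσ : 0 < σ)
    (f : E → ℝ) (hf : StrongConvexOn K σ f)
    (c₁ c₂ x₁ x₂ : E) (hx₁ : x₁ ∈ K) (hx₂ : x₂ ∈ K)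
    (hmin₁ : ∀ x ∈ K, f x₁ + ⟪c₁, x₁⟫ ≤ f x + ⟪c₁, x⟫)
    (hmin₂ : ∀ x ∈ K, f x₂ + ⟪c₂, x₂⟫ ≤ f x + ⟪c₂, x⟫) :
    σ * ‖x₁ - x₂‖ ≤ ‖c₁ - c₂‖ := by
  have h1 := tilted_min_quadratic_growth hf hσ.le c₁ x₁ x₂ hx₁ hx₂ hmin₁
  have h2 := tilted_min_quadratic_growth hf hσ.le c₂ x₂ x₁ hx₂ hx₁ hmin₂
  have hnorm : ‖x₂ - x₁‖ = ‖x₁ - x₂‖ := norm_sub_rev _ _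
  rw [hnorm] at h1
  -- sum: σ * ‖x₁-x₂‖² ≤ ⟪c₁ - c₂, x₂ - x₁⟫
  have hsum : σ * ‖x₁ - x₂‖ ^ 2 ≤ ⟪c₁ - c₂, x₂ - x₁⟫ := by
    have : ⟪c₁ - c₂, x₂ - x₁⟫ = (⟪c₁, x₂⟫ - ⟪c₁, x₁⟫) - (⟪c₂, x₂⟫ - ⟪c₂, x₁⟫) := by
      simp [inner_sub_left, inner_sub_right]; ring
    rw [this]; nlinarith
  have hcs : ⟪c₁ - c₂, x₂ - x₁⟫ ≤ ‖c₁ - c₂‖ * ‖x₁ - x₂‖ := by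
    calc ⟪c₁ - c₂, x₂ - x₁⟫ ≤ ‖c₁ - c₂‖ * ‖x₂ - x₁‖ := real_inner_le_norm _ _
      _ = _ := by rw [norm_sub_rev x₂ x₁]
  rcases eq_or_lt_of_le (norm_nonneg (x₁ - x₂)) with h | h
  · rw [← h]; simp [norm_nonneg]
  · have : σ * ‖x₁ - x₂‖ * ‖x₁ - x₂‖ ≤ ‖c₁ - c₂‖ * ‖x₁ - x₂‖ := by nlinarith
    exact le_of_mul_le_mul_right this h
end

section
/- (Lemma 1: Lipschitz continuity of the dual gradient when the primal objective is strongly convex.) Let E and F be finite-dimensional real inner product spaces, K ⊆ E convex, σ > 0, and f : E → ℝ strongly convex with parameter σ on K. Let A : E →L[ℝ] F be a continuous linear map and b ∈ F. Suppose x : F → E is a map such that for every μ ∈ F, x(μ) ∈ K and x(μ) minimizes z ↦ f(z) + ⟪μ, A z − b⟫ over K. Then the map μ ↦ A (x(μ)) is Lipschitz with constant ‖A‖² / σ. -/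
open scoped RealInnerProductSpace

/-- Lemma 1: Lipschitz continuity of the dual gradient when the primal objective is strongly
convex. If for each multiplier `μ`, `x μ ∈ K` minimizes `z ↦ f z + ⟪μ, A z - b⟫` over the
convex set `K`, and `f` is strongly convex with parameter `σ > 0` on `K`, then
`μ ↦ A (x μ)` is Lipschitz with constant `‖A‖² / σ`. -/
theorem dual_gradient_lipschitz {E F : Type*}
    [NormedAddCommGroup E] [InnerProductSpace ℝ E] [FiniteDimensional ℝ E]
    [NormedAddCommGroup F] [InnerProductSpace ℝ F] [FiniteDimensional ℝ F]
    (K : Set E) (hK : Convex ℝ K) (σ : ℝ) (hσ : 0 < σ)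
    (f : E → ℝ) (hf : StrongConvexOn K σ f)
    (A : E →L[ℝ] F) (b : F) (x : F → E)
    (hxK : ∀ μ : F, x μ ∈ K)
    (hxmin : ∀ μ : F, ∀ z ∈ K, f (x μ) + ⟪μ, A (x μ) - b⟫ ≤ f z + ⟪μ, A z - b⟫) :
    ∀ μ₁ μ₂ : F, ‖A (x μ₁) - A (x μ₂)‖ ≤ ‖A‖ ^ 2 / σ * ‖μ₁ - μ₂‖ := by
  -- Key growth estimate at the minimizer
  have key : ∀ μ : F, ∀ z ∈ K,
      f (x μ) + ⟪μ, A (x μ) - b⟫ + σ / 2 * ‖z - x μ‖ ^ 2 ≤ f z + ⟪μ, A z - b⟫ := by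
    intro μ z hz
    have hstep : ∀ t : ℝ, 0 < t → t ≤ 1 →
        σ / 2 * (1 - t) * ‖z - x μ‖ ^ 2 ≤
          (f z + ⟪μ, A z - b⟫) - (f (x μ) + ⟪μ, A (x μ) - b⟫) := by
      intro t ht ht1
      have hmem : t • z + (1 - t) • x μ ∈ K :=
        hK hz (hxK μ) ht.le (by linarith) (by ring)
      have h1 := hf.2 hz (hxK μ) ht.le (show (0:ℝ) ≤ 1 - t by linarith) (by ring)
      have h2 := hxmin μ _ hmem
      have hlin : ⟪μ, A (t • z + (1 - t) • x μ) - b⟫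
          = t * ⟪μ, A z - b⟫ + (1 - t) * ⟪μ, A (x μ) - b⟫ := by
        have hAb : A (t • z + (1 - t) • x μ) - b
            = t • (A z - b) + (1 - t) • (A (x μ) - b) := by
          rw [map_add, map_smul, map_smul]
          module
        rw [hAb, inner_add_right, real_inner_smul_right, real_inner_smul_right]
      simp only [smul_eq_mul] at h1
      rw [hlin] at h2
      have : t * (f (x μ) + ⟪μ, A (x μ) - b⟫) ≤
          t * (f z + ⟪μ, A z - b⟫) - σ / 2 * (t * (1 - t)) * ‖z - x μ‖ ^ 2 := by
        nlinarith [h1, h2]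
      have ht' : 0 < t := ht
      nlinarith [this]
    -- pass to the limit t → 0⁺
    have hlim : Filter.Tendsto (fun t : ℝ => σ / 2 * (1 - t) * ‖z - x μ‖ ^ 2)
        (nhdsWithin 0 (Set.Ioi 0)) (nhds (σ / 2 * ‖z - x μ‖ ^ 2)) := by
      have hc : Continuous (fun t : ℝ => σ / 2 * (1 - t) * ‖z - x μ‖ ^ 2) := by
        continuity
      have := (hc.tendsto 0).mono_left (nhdsWithin_le_nhds (s := Set.Ioi (0:ℝ)))
      simpa using this
    have hev : ∀ᶠ t : ℝ in nhdsWithin 0 (Set.Ioi 0),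
        σ / 2 * (1 - t) * ‖z - x μ‖ ^ 2 ≤
          (f z + ⟪μ, A z - b⟫) - (f (x μ) + ⟪μ, A (x μ) - b⟫) := by
      filter_upwards [Ioo_mem_nhdsGT_of_mem (Set.mem_Ico.2 ⟨le_refl (0:ℝ), one_pos⟩)]
        with t (ht : t ∈ Set.Ioo (0:ℝ) 1)
      exact hstep t ht.1 ht.2.le
    have := le_of_tendsto hlim hev
    linarith
  intro μ₁ μ₂
  by_cases hx : x μ₁ = x μ₂
  · rw [hx]
    simp only [sub_self, norm_zero]
    positivity
  · have h1 := key μ₁ (x μ₂) (hxK μ₂)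
    have h2 := key μ₂ (x μ₁) (hxK μ₁)
    have hnorm : ‖x μ₂ - x μ₁‖ = ‖x μ₁ - x μ₂‖ := norm_sub_rev _ _
    rw [hnorm] at h1
    -- monotonicity-type inequality
    have hmono : σ * ‖x μ₁ - x μ₂‖ ^ 2 ≤ ⟪μ₁ - μ₂, A (x μ₂) - A (x μ₁)⟫ := by
      have hsplit : ⟪μ₁ - μ₂, A (x μ₂) - A (x μ₁)⟫
          = (⟪μ₁, A (x μ₂) - b⟫ - ⟪μ₁, A (x μ₁) - b⟫)
            + (⟪μ₂, A (x μ₁) - b⟫ - ⟪μ₂, A (x μ₂) - b⟫) := by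
        simp only [inner_sub_left, inner_sub_right]
        ring
      rw [hsplit]
      linarith
    have hcauchy : ⟪μ₁ - μ₂, A (x μ₂) - A (x μ₁)⟫ ≤ ‖μ₁ - μ₂‖ * (‖A‖ * ‖x μ₁ - x μ₂‖) := by
      refine (real_inner_le_norm _ _).trans ?_
      gcongr
      calc ‖A (x μ₂) - A (x μ₁)‖ = ‖A (x μ₂ - x μ₁)‖ := by rw [map_sub]
        _ ≤ ‖A‖ * ‖x μ₂ - x μ₁‖ := A.le_opNorm _
        _ = ‖A‖ * ‖x μ₁ - x μ₂‖ := by rw [norm_sub_rev]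
    have hpos : 0 < ‖x μ₁ - x μ₂‖ := by
      rw [norm_pos_iff]; exact sub_ne_zero_of_ne hx
    have hlip : σ * ‖x μ₁ - x μ₂‖ ≤ ‖A‖ * ‖μ₁ - μ₂‖ := by
      have := hmono.trans hcauchy
      nlinarith [this, hpos]
    have hA : ‖A (x μ₁) - A (x μ₂)‖ ≤ ‖A‖ * ‖x μ₁ - x μ₂‖ := by
      rw [← map_sub]; exact A.le_opNorm _
    have hAnn : (0:ℝ) ≤ ‖A‖ := norm_nonneg _
    rw [div_mul_eq_mul_div, le_div_iff₀ hσ]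
    nlinarith [hA, hlip, hAnn, hpos]
end
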